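/- arXiv:1504.07707 — 10 statements merged into one kernel-verified Lean document; each statement's English description precedes it below -/
import Mathlib

section
/- Let (ρ, p, v) be a primitive state (ρ > 0, p > 0, |v| < 1) with adiabatic index Γ ∈ (1,2], and let U = (D, m, E) be its conservative state. Then D > 0 and E > √(D² + |m|²); that is, U belongs to the admissible set G₁. -/
/-!
Write `a = ρ h`, so that `D = ρ W`, `|m| = a W² |v|` and `E = a W² - p`. Using `W² (1 - |v|²) = 1`,
`E² - D² - |m|² = W² (a² - 2 a p - ρ²) + p²`. For `Γ ≤ 2` one has `p/(Γ - 1) ≥ p`, hence `a ≥ ρ + 2p`,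
and then `a² - 2 a p - ρ² ≥ a ρ - ρ² > 0`.
-/

lemma add_two_mul_le_mul_enthalpy {Γ ρ p : ℝ} (hΓ1 : 1 < Γ) (hΓ2 : Γ ≤ 2) (hρ : 0 < ρ)
    (hp : 0 ≤ p) : ρ + 2 * p ≤ ρ * (1 + p / ((Γ - 1) * ρ) + p / ρ) := by
  have hΓ : 0 < Γ - 1 := by linarith
  have hρh : ρ * (1 + p / ((Γ - 1) * ρ) + p / ρ) = ρ + p / (Γ - 1) + p := by
    field_simp
  have hp_le : p ≤ p / (Γ - 1) := by
    rw [le_div_iff₀ hΓ]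
    nlinarith
  linarith

lemma one_div_sqrt_sq_mul_self {x : ℝ} (hx : 0 < x) : (1 / √x) ^ 2 * x = 1 := by
  rw [div_pow, Real.sq_sqrt hx.le]
  field_simp

lemma one_le_sq_of_sq_mul_one_sub_sq {W s : ℝ} (hW : W ^ 2 * (1 - s ^ 2) = 1) : 1 ≤ W ^ 2 := by
  nlinarith [mul_nonneg (sq_nonneg W) (sq_nonneg s)]

theorem sqrt_sq_add_norm_sq_lt {V : Type*} [NormedAddCommGroup V] [NormedSpace ℝ V]
    {ρ p a W : ℝ} {v : V} (hρ : 0 < ρ) (hp : 0 < p) (ha : ρ + 2 * p ≤ a)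
    (hW : W ^ 2 * (1 - ‖v‖ ^ 2) = 1) :
    √((ρ * W) ^ 2 + ‖(a * W ^ 2) • v‖ ^ 2) < a * W ^ 2 - p := by
  have hW1 : 1 ≤ W ^ 2 := one_le_sq_of_sq_mul_one_sub_sq hW
  have hE : 0 < a * W ^ 2 - p := by nlinarith
  have hnorm : ‖(a * W ^ 2) • v‖ ^ 2 = a ^ 2 * W ^ 4 * ‖v‖ ^ 2 := by
    rw [norm_smul, Real.norm_eq_abs, mul_pow, sq_abs]
    ring
  have hgap : (a * W ^ 2 - p) ^ 2 - ((ρ * W) ^ 2 + a ^ 2 * W ^ 4 * ‖v‖ ^ 2)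
      = W ^ 2 * (a * (a - 2 * p) - ρ ^ 2) + p ^ 2 := by
    linear_combination a ^ 2 * W ^ 2 * hW
  have hquad : 0 < a * (a - 2 * p) - ρ ^ 2 := by nlinarith
  rw [Real.sqrt_lt' hE, hnorm]
  nlinarith [mul_pos (by linarith : (0 : ℝ) < W ^ 2) hquad]

theorem primitive_state_in_admissible_set_general
    (d : ℕ) (Γ ρ p : ℝ)
    (hΓ1 : 1 < Γ) (hΓ2 : Γ ≤ 2) (hρ : 0 < ρ) (hp : 0 < p)
    (v : EuclideanSpace ℝ (Fin d)) (hv : ‖v‖ < 1)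
    (e h W D E : ℝ) (m : EuclideanSpace ℝ (Fin d))
    (he : e = p / ((Γ - 1) * ρ))
    (hh : h = 1 + e + p / ρ)
    (hW : W = 1 / Real.sqrt (1 - ‖v‖ ^ 2))
    (hD : D = ρ * W)
    (hm : m = (ρ * h * W ^ 2) • v)
    (hE : E = ρ * h * W ^ 2 - p) :
    0 < D ∧ Real.sqrt (D ^ 2 + ‖m‖ ^ 2) < E := by
  have hv2 : 0 < 1 - ‖v‖ ^ 2 := sub_pos.mpr (pow_lt_one₀ (norm_nonneg v) hv two_ne_zero)
  have hW0 : 0 < W := by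
    rw [hW]
    exact one_div_pos.mpr (Real.sqrt_pos.mpr hv2)
  have hWv : W ^ 2 * (1 - ‖v‖ ^ 2) = 1 := hW ▸ one_div_sqrt_sq_mul_self hv2
  have hρh : ρ + 2 * p ≤ ρ * h := hh ▸ he ▸ add_two_mul_le_mul_enthalpy hΓ1 hΓ2 hρ hp.le
  subst hD hm hE
  exact ⟨mul_pos hρ hW0, sqrt_sq_add_norm_sq_lt hρ hp hρh hWv⟩

/-- A primitive state (ρ, p, v) with ρ > 0, p > 0, ‖v‖ < 1 and
adiabatic index Γ ∈ (1,2] has conservative state U = (D, m, E) satisfying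
D > 0 and E > √(D² + ‖m‖²), i.e. U ∈ G₁. -/
theorem primitive_state_in_admissible_set
    (d : ℕ) (hd : 0 < d) (Γ ρ p : ℝ)
    (hΓ1 : 1 < Γ) (hΓ2 : Γ ≤ 2) (hρ : 0 < ρ) (hp : 0 < p)
    (v : EuclideanSpace ℝ (Fin d)) (hv : ‖v‖ < 1)
    (e h W D E : ℝ) (m : EuclideanSpace ℝ (Fin d))
    (he : e = p / ((Γ - 1) * ρ))
    (hh : h = 1 + e + p / ρ)
    (hW : W = 1 / Real.sqrt (1 - ‖v‖ ^ 2))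
    (hD : D = ρ * W)
    (hm : m = (ρ * h * W ^ 2) • v)
    (hE : E = ρ * h * W ^ 2 - p) :
    0 < D ∧ Real.sqrt (D ^ 2 + ‖m‖ ^ 2) < E :=
  primitive_state_in_admissible_set_general d Γ ρ p hΓ1 hΓ2 hρ hp v hv e h W D E m he hh hW hD hm hE
end

section
/- Let Γ ∈ (1,2], D > 0, m ∈ ℝ^d, and E > √(D² + |m|²). Define Φ : [0,∞) → ℝ by Φ(p) = |m|²/(E+p) + D·√(1 − |m|²/(E+p)²) + p/(Γ−1) − E. Then there exists a unique p* ∈ (0,∞) with Φ(p*) = 0. -/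
/-!
Write `n = ‖m‖`. The residual is continuous on `[0, ∞)`, negative at `0` because
`D < √(E² - n²)`, and nonnegative at `(Γ - 1) E`. It is strictly increasing: `n²/(E + p) + p`
increases since `n < E`, the square-root term increases, and `p/(Γ - 1) - p` does not decrease
because `Γ ≤ 2`. The intermediate value theorem then gives exactly one positive root.
-/

open Set

theorem existsUnique_pos_eq_zero_of_strictMonoOn {f : ℝ → ℝ} {b : ℝ}
    (hcont : ContinuousOn f (Ici 0)) (hmono : StrictMonoOn f (Ici 0))
    (hf0 : f 0 < 0) (hb : 0 ≤ b) (hfb : 0 ≤ f b) :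
    ∃! x, 0 < x ∧ f x = 0 := by
  obtain ⟨x, hx, hfx⟩ : ∃ x ∈ Icc 0 b, f x = 0 :=
    intermediate_value_Icc hb (hcont.mono Icc_subset_Ici_self) ⟨hf0.le, hfb⟩
  have hx0 : 0 < x := hx.1.lt_of_ne (by rintro rfl; exact hf0.ne hfx)
  refine ⟨x, ⟨hx0, hfx⟩, fun y ⟨hy, hfy⟩ => ?_⟩
  exact hmono.injOn (mem_Ici.2 hy.le) (mem_Ici.2 hx0.le) (hfy.trans hfx.symm)

theorem strictMonoOn_sq_div_add_add {n E : ℝ} (hn : 0 ≤ n) (hnE : n < E) :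
    StrictMonoOn (fun p => n ^ 2 / (E + p) + p) (Ici 0) := by
  intro p hp q hq hpq
  simp only [mem_Ici] at hp hq
  have hEp : 0 < E + p := by linarith
  have hEq : 0 < E + q := by linarith
  have hdiff : n ^ 2 / (E + p) - n ^ 2 / (E + q) = n ^ 2 * (q - p) / ((E + p) * (E + q)) := by
    field_simp
    ring
  have hlt : n ^ 2 * (q - p) / ((E + p) * (E + q)) < q - p := by
    have hprod : n ^ 2 < (E + p) * (E + q) := by nlinarith
    rw [div_lt_iff₀ (by positivity)]
    nlinarith
  simp only
  linarith

theorem monotoneOn_sqrt_one_sub_sq_div_add_sq {n E : ℝ} (hE : 0 < E) :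
    MonotoneOn (fun p => √(1 - n ^ 2 / (E + p) ^ 2)) (Ici 0) := by
  intro p hp q hq hpq
  simp only [mem_Ici] at hp
  have hEp : 0 < E + p := by linarith
  dsimp only
  gcongr

noncomputable def pressureResidual (Γ D E n p : ℝ) : ℝ :=
  n ^ 2 / (E + p) + D * √(1 - n ^ 2 / (E + p) ^ 2) + p / (Γ - 1) - E

section
variable {Γ D E n : ℝ}

theorem continuousOn_pressureResidual (hE : 0 < E) :
    ContinuousOn (pressureResidual Γ D E n) (Ici 0) := by
  unfold pressureResidual
  fun_prop (disch := intro p hp; rw [mem_Ici] at hp; positivity)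

theorem strictMonoOn_pressureResidual (hΓ1 : 1 < Γ) (hΓ2 : Γ ≤ 2) (hD : 0 ≤ D) (hn : 0 ≤ n)
    (hnE : n < E) : StrictMonoOn (pressureResidual Γ D E n) (Ici 0) := by
  intro p hp q hq hpq
  have hE : 0 < E := hn.trans_lt hnE
  have hrat := strictMonoOn_sq_div_add_add hn hnE hp hq hpq
  have hsqrt := mul_le_mul_of_nonneg_left
    (monotoneOn_sqrt_one_sub_sq_div_add_sq (n := n) hE hp hq hpq.le) hD
  have hlin : p / (Γ - 1) - p ≤ q / (Γ - 1) - q := by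
    have : 1 ≤ 1 / (Γ - 1) := by rw [le_div_iff₀ (by linarith)]; linarith
    rw [div_eq_mul_one_div p, div_eq_mul_one_div q]
    nlinarith
  simp only at hrat hsqrt
  unfold pressureResidual
  linarith

theorem pressureResidual_zero_neg (hE : 0 < E) (hDnE : D ^ 2 + n ^ 2 < E ^ 2) :
    pressureResidual Γ D E n 0 < 0 := by
  set A := √(E ^ 2 - n ^ 2)
  have hA2 : A ^ 2 = E ^ 2 - n ^ 2 := Real.sq_sqrt (by nlinarith)
  have hDA : D < A := by nlinarith [Real.sqrt_nonneg (E ^ 2 - n ^ 2)]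
  have hsqrt : √(1 - n ^ 2 / E ^ 2) = A / E := by
    rw [← Real.sqrt_sq (div_nonneg (Real.sqrt_nonneg _) hE.le), div_pow, hA2]
    congr 1
    field_simp
  unfold pressureResidual
  rw [add_zero, zero_div, add_zero, hsqrt, ← mul_div_assoc, ← add_div, sub_neg,
    div_lt_iff₀ hE]
  nlinarith

theorem pressureResidual_sub_one_mul_nonneg (hΓ1 : 1 < Γ) (hD : 0 ≤ D) (hE : 0 < E) :
    0 ≤ pressureResidual Γ D E n ((Γ - 1) * E) := by
  have hΓ : Γ - 1 ≠ 0 := by linarith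
  unfold pressureResidual
  rw [mul_div_cancel_left₀ _ hΓ, add_sub_cancel_right]
  have : 0 < E + (Γ - 1) * E := by nlinarith
  positivity

end

theorem pressure_equation_unique_positive_root_general
    (d : ℕ) (Γ D E : ℝ) (m : EuclideanSpace ℝ (Fin d))
    (hΓ1 : 1 < Γ) (hΓ2 : Γ ≤ 2) (hD : 0 < D)
    (hE : Real.sqrt (D ^ 2 + ‖m‖ ^ 2) < E) :
    ∃! pstar : ℝ, 0 < pstar ∧
      ‖m‖ ^ 2 / (E + pstar) + D * Real.sqrt (1 - ‖m‖ ^ 2 / (E + pstar) ^ 2)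
        + pstar / (Γ - 1) - E = 0 := by
  have hE0 : 0 < E := (Real.sqrt_nonneg _).trans_lt hE
  have hDmE : D ^ 2 + ‖m‖ ^ 2 < E ^ 2 := (Real.sqrt_lt' hE0).mp hE
  have hmE : ‖m‖ < E := by nlinarith [norm_nonneg m]
  exact existsUnique_pos_eq_zero_of_strictMonoOn (continuousOn_pressureResidual hE0)
    (strictMonoOn_pressureResidual hΓ1 hΓ2 hD.le (norm_nonneg m) hmE)
    (pressureResidual_zero_neg hE0 hDmE) (mul_nonneg (by linarith) hE0.le)
    (pressureResidual_sub_one_mul_nonneg hΓ1 hD.le hE0)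

/-- For Γ ∈ (1,2], D > 0, m ∈ ℝ^d and E > √(D² + ‖m‖²), the
pressure equation Φ(p) = ‖m‖²/(E+p) + D√(1 − ‖m‖²/(E+p)²) + p/(Γ−1) − E = 0
has a unique positive solution. -/
theorem pressure_equation_unique_positive_root
    (d : ℕ) (hd : 0 < d) (Γ D E : ℝ) (m : EuclideanSpace ℝ (Fin d))
    (hΓ1 : 1 < Γ) (hΓ2 : Γ ≤ 2) (hD : 0 < D)
    (hE : Real.sqrt (D ^ 2 + ‖m‖ ^ 2) < E) :
    ∃! pstar : ℝ, 0 < pstar ∧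
      ‖m‖ ^ 2 / (E + pstar) + D * Real.sqrt (1 - ‖m‖ ^ 2 / (E + pstar) ^ 2)
        + pstar / (Γ - 1) - E = 0 :=
  pressure_equation_unique_positive_root_general d Γ D E m hΓ1 hΓ2 hD hE
end

section
/- Let Γ ∈ (1,2], D > 0, m ∈ ℝ^d, and E > √(D² + |m|²). Then the function Φ(p) = |m|²/(E+p) + D·√(1 − |m|²/(E+p)²) + p/(Γ−1) − E is differentiable on [0,∞) and its derivative satisfies Φ'(p) ≥ 1 − |m|²/(E+p)² > 0 for every p ∈ [0,∞); in particular Φ is strictly monotonically increasing on [0,∞). -/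
/-!
Φ is the sum of `p / (Γ - 1)`, whose slope `1 / (Γ - 1)` is at least `1` because `Γ ≤ 2`,
of `|m|² / (E + p)`, whose slope is `-|m|² / (E + p)²`, and of `D √(1 - |m|² / (E + p)²)`,
which is increasing in `p` since `D > 0`. Hence `Φ' ≥ 1 - |m|² / (E + p)²`, and this is positive
because `|m| < √(D² + |m|²) < E ≤ E + p`.
-/

open Real Set

/-- The pressure function with `M` standing for `|m|²`. -/
noncomputable def pressureFunction (Γ D E M p : ℝ) : ℝ :=
  M / (E + p) + D * √(1 - M / (E + p) ^ 2) + p / (Γ - 1) - E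

noncomputable def pressureFunctionDeriv (Γ D E M p : ℝ) : ℝ :=
  -M / (E + p) ^ 2 + D * M / ((E + p) ^ 3 * √(1 - M / (E + p) ^ 2)) + 1 / (Γ - 1)

section

variable {Γ D E M p : ℝ}

lemma hasDerivAt_sqrt_one_sub_div_sq (hx : E + p ≠ 0) (hw : 0 < 1 - M / (E + p) ^ 2) :
    HasDerivAt (fun q => √(1 - M / (E + q) ^ 2))
      (M / ((E + p) ^ 3 * √(1 - M / (E + p) ^ 2))) p := by
  have hlin : HasDerivAt (fun q => E + q) 1 p := (hasDerivAt_id p).const_add E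
  have hpow : HasDerivAt (fun q => (E + q) ^ 2) (2 * (E + p)) p :=
    ((hasDerivAt_pow 2 (E + p)).comp p hlin).congr_deriv (by ring)
  have hsq : HasDerivAt (fun q => M / (E + q) ^ 2) (-(2 * M) / (E + p) ^ 3) p :=
    ((hasDerivAt_const p M).fun_div hpow (pow_ne_zero 2 hx)).congr_deriv (by field_simp; ring)
  have hs : √(1 - M / (E + p) ^ 2) ≠ 0 := (sqrt_pos.mpr hw).ne'
  exact ((hsq.const_sub 1).sqrt hw.ne').congr_deriv (by field_simp)

lemma hasDerivAt_pressureFunction (hx : E + p ≠ 0) (hw : 0 < 1 - M / (E + p) ^ 2) :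
    HasDerivAt (pressureFunction Γ D E M) (pressureFunctionDeriv Γ D E M p) p := by
  have hlin : HasDerivAt (fun q => E + q) 1 p := (hasDerivAt_id p).const_add E
  have hkin : HasDerivAt (fun q => M / (E + q)) (-M / (E + p) ^ 2) p :=
    ((hasDerivAt_const p M).fun_div hlin hx).congr_deriv (by ring)
  have hpres : HasDerivAt (fun q => q / (Γ - 1)) (1 / (Γ - 1)) p := (hasDerivAt_id p).div_const _
  exact (((hkin.add ((hasDerivAt_sqrt_one_sub_div_sq hx hw).const_mul D)).add hpres).sub_const
    E).congr_deriv (by simp only [pressureFunctionDeriv]; ring)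

lemma one_sub_div_sq_le_pressureFunctionDeriv (hΓ1 : 1 < Γ) (hΓ2 : Γ ≤ 2) (hD : 0 ≤ D)
    (hM : 0 ≤ M) (hx : 0 ≤ E + p) :
    1 - M / (E + p) ^ 2 ≤ pressureFunctionDeriv Γ D E M p := by
  have hkin : 0 ≤ D * M / ((E + p) ^ 3 * √(1 - M / (E + p) ^ 2)) := by positivity
  have hpres : 1 ≤ 1 / (Γ - 1) := by rw [le_div_iff₀ (by linarith)]; linarith
  simp only [pressureFunctionDeriv, neg_div]
  linarith

end

lemma one_sub_sq_div_sq_pos {a x : ℝ} (h : |a| < x) : 0 < 1 - a ^ 2 / x ^ 2 := by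
  have hx : 0 < x ^ 2 := pow_pos ((abs_nonneg a).trans_lt h) 2
  rw [sub_pos, div_lt_one hx]
  exact sq_lt_sq.mpr (h.trans_le (le_abs_self x))

theorem pressure_function_strictly_increasing_general
    (d : ℕ) (Γ D E : ℝ) (m : EuclideanSpace ℝ (Fin d))
    (hΓ1 : 1 < Γ) (hΓ2 : Γ ≤ 2) (hD : 0 < D)
    (hE : Real.sqrt (D ^ 2 + ‖m‖ ^ 2) < E)
    (Φ : ℝ → ℝ)
    (hΦ : ∀ p : ℝ, Φ p = ‖m‖ ^ 2 / (E + p) + D * Real.sqrt (1 - ‖m‖ ^ 2 / (E + p) ^ 2)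
        + p / (Γ - 1) - E) :
    DifferentiableOn ℝ Φ (Set.Ici 0) ∧
    (∀ p ∈ Set.Ici (0 : ℝ),
      derivWithin Φ (Set.Ici 0) p ≥ 1 - ‖m‖ ^ 2 / (E + p) ^ 2 ∧
      0 < 1 - ‖m‖ ^ 2 / (E + p) ^ 2) ∧
    StrictMonoOn Φ (Set.Ici 0) := by
  obtain rfl : Φ = pressureFunction Γ D E (‖m‖ ^ 2) := funext hΦ
  have hmE : ‖m‖ < E := (le_sqrt_of_sq_le (le_add_of_nonneg_left (sq_nonneg D))).trans_lt hE
  have hmx : ∀ p ∈ Ici (0 : ℝ), |‖m‖| < E + p := fun p hp => by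
    rw [abs_norm]; linarith [mem_Ici.mp hp]
  have hpos : ∀ p ∈ Ici (0 : ℝ), 0 < 1 - ‖m‖ ^ 2 / (E + p) ^ 2 := fun p hp =>
    one_sub_sq_div_sq_pos (hmx p hp)
  have hderiv : ∀ p ∈ Ici (0 : ℝ), HasDerivAt (pressureFunction Γ D E (‖m‖ ^ 2))
      (pressureFunctionDeriv Γ D E (‖m‖ ^ 2) p) p := fun p hp =>
    hasDerivAt_pressureFunction ((abs_nonneg _).trans_lt (hmx p hp)).ne' (hpos p hp)
  have hbound : ∀ p ∈ Ici (0 : ℝ),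
      1 - ‖m‖ ^ 2 / (E + p) ^ 2 ≤ pressureFunctionDeriv Γ D E (‖m‖ ^ 2) p := fun p hp =>
    one_sub_div_sq_le_pressureFunctionDeriv hΓ1 hΓ2 hD.le (sq_nonneg _)
      ((abs_nonneg _).trans (hmx p hp).le)
  refine ⟨fun p hp => (hderiv p hp).differentiableAt.differentiableWithinAt,
    fun p hp => ⟨?_, hpos p hp⟩, ?_⟩
  · rw [(hderiv p hp).hasDerivWithinAt.derivWithin (uniqueDiffOn_Ici 0 p hp)]
    exact hbound p hp
  · exact strictMonoOn_of_hasDerivWithinAt_pos (convex_Ici 0)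
      (fun p hp => (hderiv p hp).continuousAt.continuousWithinAt)
      (fun p hp => (hderiv p (interior_subset hp)).hasDerivWithinAt)
      (fun p hp => (hpos p (interior_subset hp)).trans_le (hbound p (interior_subset hp)))

/-- For Γ ∈ (1,2], D > 0, m ∈ ℝ^d and E > √(D² + ‖m‖²), the
function Φ(p) = ‖m‖²/(E+p) + D√(1 − ‖m‖²/(E+p)²) + p/(Γ−1) − E is
differentiable on [0,∞), its derivative satisfies
Φ'(p) ≥ 1 − ‖m‖²/(E+p)² > 0 for every p ≥ 0, and Φ is strictly
monotonically increasing on [0,∞). -/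
theorem pressure_function_strictly_increasing
    (d : ℕ) (hd : 0 < d) (Γ D E : ℝ) (m : EuclideanSpace ℝ (Fin d))
    (hΓ1 : 1 < Γ) (hΓ2 : Γ ≤ 2) (hD : 0 < D)
    (hE : Real.sqrt (D ^ 2 + ‖m‖ ^ 2) < E)
    (Φ : ℝ → ℝ)
    (hΦ : ∀ p : ℝ, Φ p = ‖m‖ ^ 2 / (E + p) + D * Real.sqrt (1 - ‖m‖ ^ 2 / (E + p) ^ 2)
        + p / (Γ - 1) - E) :
    DifferentiableOn ℝ Φ (Set.Ici 0) ∧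
    (∀ p ∈ Set.Ici (0 : ℝ),
      derivWithin Φ (Set.Ici 0) p ≥ 1 - ‖m‖ ^ 2 / (E + p) ^ 2 ∧
      0 < 1 - ‖m‖ ^ 2 / (E + p) ^ 2) ∧
    StrictMonoOn Φ (Set.Ici 0) :=
  pressure_function_strictly_increasing_general d Γ D E m hΓ1 hΓ2 hD hE Φ hΦ
end

section
/- Let Γ ∈ (1,2] and let (D, m, E) ∈ ℝ × ℝ^d × ℝ satisfy D > 0 and E > √(D² + |m|²). Then there exists a primitive state (ρ, p, v) with ρ > 0, p > 0, and |v| < 1 whose conservative state equals (D, m, E); i.e., D = ρW, m = ρhW²v, and E = ρhW² − p, where e = p/((Γ−1)ρ), h = 1 + e + p/ρ, and W = (1−|v|²)^{−1/2}. Consequently, the set G₁ = {(D,m,E) : D > 0, E − √(D²+|m|²) > 0} coincides with the set of conservative states of primitive states. -/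
set_option maxHeartbeats 1000000


/-- If D > 0 and E > √(D² + ‖m‖²), then (D, m, E) is the
conservative state of some primitive state (ρ, p, v) with ρ > 0, p > 0,
‖v‖ < 1 (here h = 1 + e + p/ρ with e = p/((Γ−1)ρ) and
W = (1 − ‖v‖²)^{−1/2} are written out explicitly). -/
theorem admissible_state_has_primitive_state
    (d : ℕ) (hd : 0 < d) (Γ D E : ℝ) (m : EuclideanSpace ℝ (Fin d))
    (hΓ1 : 1 < Γ) (hΓ2 : Γ ≤ 2) (hD : 0 < D)
    (hq : Real.sqrt (D ^ 2 + ‖m‖ ^ 2) < E) :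
    ∃ (ρ p : ℝ) (v : EuclideanSpace ℝ (Fin d)),
      0 < ρ ∧ 0 < p ∧ ‖v‖ < 1 ∧
      D = ρ * (1 / Real.sqrt (1 - ‖v‖ ^ 2)) ∧
      m = (ρ * (1 + p / ((Γ - 1) * ρ) + p / ρ) * (1 / Real.sqrt (1 - ‖v‖ ^ 2)) ^ 2) • v ∧
      E = ρ * (1 + p / ((Γ - 1) * ρ) + p / ρ) * (1 / Real.sqrt (1 - ‖v‖ ^ 2)) ^ 2 - p := by
  set M : ℝ := ‖m‖ with hMdef
  have hM0 : 0 ≤ M := norm_nonneg m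
  have hsum : 0 ≤ D ^ 2 + M ^ 2 := by positivity
  have hE : 0 < E := lt_of_le_of_lt (Real.sqrt_nonneg _) hq
  have hsq : D ^ 2 + M ^ 2 < E ^ 2 := by
    nlinarith [Real.sq_sqrt hsum, Real.sqrt_nonneg (D ^ 2 + M ^ 2)]
  have hME : M < E := by nlinarith
  have hΓ0 : 0 < Γ - 1 := by linarith
  set k : ℝ := Γ / (Γ - 1) with hkdef
  have hk0 : 0 < k := by rw [hkdef]; positivity
  set sf : ℝ → ℝ := fun x => Real.sqrt ((E + x) ^ 2 - M ^ 2) with hsfdef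
  set Wf : ℝ → ℝ := fun x => (E + x) / sf x with hWfdef
  set g : ℝ → ℝ := fun x => E + x - D * Wf x - k * x * (Wf x) ^ 2 with hgdef
  set P : ℝ := (Γ - 1) * E with hPdef
  have hP0 : 0 < P := by positivity
  have hsfpos : ∀ x, 0 ≤ x → 0 < sf x := by
    intro x hx
    apply Real.sqrt_pos.mpr
    nlinarith
  have hsfle : ∀ x, 0 ≤ x → sf x ≤ E + x := by
    intro x hx
    have h : sf x ≤ Real.sqrt ((E + x) ^ 2) := by
      apply Real.sqrt_le_sqrt; nlinarith
    rwa [Real.sqrt_sq (by linarith)] at h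
  have hW1 : ∀ x, 0 ≤ x → 1 ≤ Wf x := by
    intro x hx
    rw [hWfdef]
    rw [le_div_iff₀ (hsfpos x hx)]
    simpa using hsfle x hx
  have hsfc : Continuous sf := by
    apply Real.continuous_sqrt.comp; continuity
  have hadd : Continuous (fun x : ℝ => E + x) := by continuity
  have hWfc : ContinuousOn Wf (Set.Icc 0 P) := by
    apply ContinuousOn.div hadd.continuousOn hsfc.continuousOn
    intro x hx
    exact (hsfpos x hx.1).ne'
  have hgc : ContinuousOn g (Set.Icc 0 P) := by
    apply ContinuousOn.sub
    apply ContinuousOn.sub hadd.continuousOn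
    · exact continuousOn_const.mul hWfc
    · exact (continuousOn_const.mul continuousOn_id).mul (hWfc.pow 2)
  have hg0 : 0 < g 0 := by
    have hsE : sf 0 = Real.sqrt (E ^ 2 - M ^ 2) := by rw [hsfdef]; norm_num
    have hspos : 0 < sf 0 := hsfpos 0 le_rfl
    have hDlt : D < sf 0 := by
      rw [hsE]
      have h2 : D = Real.sqrt (D ^ 2) := (Real.sqrt_sq hD.le).symm
      rw [h2]
      apply Real.sqrt_lt_sqrt (by positivity)
      nlinarith
    simp only [hgdef, hWfdef, add_zero, mul_zero, zero_mul, sub_zero]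
    rw [sub_pos, ← mul_div_assoc, div_lt_iff₀ hspos]
    nlinarith
  have hgP : g P < 0 := by
    have h1 : 1 ≤ Wf P := hW1 P hP0.le
    have h2 : D ≤ D * Wf P := le_mul_of_one_le_right hD.le h1
    have h3 : k * P * 1 ≤ k * P * (Wf P) ^ 2 := by
      apply mul_le_mul_of_nonneg_left (by nlinarith) (by positivity)
    have hkP : k * P = Γ * E := by
      rw [hkdef, hPdef]; field_simp
    simp only [hgdef]
    nlinarith
  have hmem : (0:ℝ) ∈ Set.Icc (g P) (g 0) := ⟨hgP.le, hg0.le⟩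
  obtain ⟨p, hpmem, hgp⟩ := intermediate_value_Icc' hP0.le hgc hmem
  have hp0 : 0 < p := by
    rcases lt_or_eq_of_le hpmem.1 with h | h
    · exact h
    · exfalso; rw [← h] at hgp; rw [hgp] at hg0; exact lt_irrefl 0 hg0
  set c : ℝ := E + p with hcdef
  have hc0 : 0 < c := by rw [hcdef]; linarith
  set s : ℝ := sf p with hsdef
  have hs0 : 0 < s := hsfpos p hp0.le
  have hs2 : s ^ 2 = c ^ 2 - M ^ 2 := by
    have h1 : sf p = Real.sqrt ((E + p) ^ 2 - M ^ 2) := rfl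
    rw [hsdef, h1, Real.sq_sqrt (by nlinarith), hcdef]
  have hkey : c = D * (c / s) + k * p * (c / s) ^ 2 := by
    have h := hgp
    simp only [hgdef, hWfdef, ← hsdef, ← hcdef] at h
    linarith
  set ρ : ℝ := D * s / c with hρdef
  have hρ0 : 0 < ρ := by positivity
  set v : EuclideanSpace ℝ (Fin d) := c⁻¹ • m with hvdef
  have hnv : ‖v‖ = M / c := by
    rw [hvdef, norm_smul, norm_inv, Real.norm_eq_abs, abs_of_pos hc0, hMdef]
    ring
  have hnvlt : ‖v‖ < 1 := by
    rw [hnv, div_lt_one hc0, hcdef]; linarith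
  have hsqrt : Real.sqrt (1 - ‖v‖ ^ 2) = s / c := by
    have h : 1 - ‖v‖ ^ 2 = (s / c) ^ 2 := by
      rw [hnv, div_pow, div_pow, hs2]
      field_simp
    rw [h, Real.sqrt_sq (by positivity)]
  have hinv : 1 / Real.sqrt (1 - ‖v‖ ^ 2) = c / s := by
    rw [hsqrt, one_div, inv_div]
  have hC : ρ * (1 + p / ((Γ - 1) * ρ) + p / ρ) * (c / s) ^ 2 = c := by
    have h : ρ * (1 + p / ((Γ - 1) * ρ) + p / ρ) * (c / s) ^ 2
        = D * (c / s) + k * p * (c / s) ^ 2 := by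
      rw [hρdef, hkdef]
      field_simp
      ring
    rw [h, ← hkey]
  refine ⟨ρ, p, v, hρ0, hp0, hnvlt, ?_, ?_, ?_⟩
  · rw [hinv, hρdef]; field_simp
  · rw [hinv, hC, hvdef, smul_smul, mul_inv_cancel₀ hc0.ne', one_smul]
  · rw [hinv, hC, hcdef]; ring
end

section
/- Let (ρ, p, v) be a primitive state with adiabatic index Γ ∈ (1,2], sound speed c_s = √(Γp/(ρh)), Lorentz factor W = (1−|v|²)^{−1/2}, and spectral radius ϱ₁ = (|v₁|(1−c_s²) + c_s W^{−1}√(1 − v₁² − (|v|²−v₁²)c_s²)) / (1 − |v|²c_s²). Then for every α ≥ ϱ₁ one has 1 ± v₁/α ≥ 1 − |v₁|/α ≥ 1 − |v₁|/ϱ₁ > W^{−2}c_s/(1 + c_s) > 0. -/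
set_option maxHeartbeats 1000000 in
/-- Pure real-arithmetic core of Statement 11. -/
lemma aux_spectral_bound (a s w cs A sr α : ℝ)
    (ha0 : 0 ≤ a) (has : a ≤ s) (hs1 : s < 1)
    (hw2 : w ^ 2 = 1 - s ^ 2) (hwpos : 0 < w)
    (hcspos : 0 < cs) (hcs1 : cs < 1)
    (hA2 : A ^ 2 = 1 - a ^ 2 - (s ^ 2 - a ^ 2) * cs ^ 2) (hApos : 0 < A)
    (hsr : sr = (a * (1 - cs ^ 2) + cs * w * A) / (1 - s ^ 2 * cs ^ 2))
    (hα : sr ≤ α) :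
    0 < sr ∧ a / α ≤ a / sr ∧ w ^ 2 * cs / (1 + cs) < 1 - a / sr
      ∧ 0 < w ^ 2 * cs / (1 + cs) := by
  have hs0 : 0 ≤ s := le_trans ha0 has
  have ha1 : a < 1 := lt_of_le_of_lt has hs1
  have h1cs : (0:ℝ) < 1 + cs := by linarith
  have hDpos : 0 < 1 - s ^ 2 * cs ^ 2 := by nlinarith
  have hNpos : 0 < a * (1 - cs ^ 2) + cs * w * A := by
    nlinarith [mul_pos (mul_pos hcspos hwpos) hApos,
      mul_nonneg ha0 (by nlinarith : (0:ℝ) ≤ 1 - cs ^ 2)]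
  have hsrpos : 0 < sr := by rw [hsr]; exact div_pos hNpos hDpos
  have hαpos : 0 < α := lt_of_lt_of_le hsrpos hα
  have hwA : w * A ≤ 1 - a ^ 2 := by
    have h1 : (w * A) ^ 2 ≤ (1 - a ^ 2) ^ 2 := by
      have e : (w * A) ^ 2 = w ^ 2 * A ^ 2 := by ring
      rw [e, hw2, hA2]
      nlinarith [mul_nonneg (by nlinarith : (0:ℝ) ≤ 1 - a ^ 2)
          (by nlinarith : (0:ℝ) ≤ s ^ 2 - a ^ 2),
        mul_nonneg (mul_nonneg (by nlinarith : (0:ℝ) ≤ 1 - s ^ 2)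
          (by nlinarith : (0:ℝ) ≤ s ^ 2 - a ^ 2)) (sq_nonneg cs)]
    have h2 : 0 < 1 - a ^ 2 + w * A := by
      nlinarith [mul_pos hwpos hApos]
    nlinarith
  have hcore : 0 < (1 + cs) * (1 - a ^ 2) - w * (a * A + cs * w) := by
    have h3 : a * (w * A) ≤ a * (1 - a ^ 2) := mul_le_mul_of_nonneg_left hwA ha0
    have h4 : cs * w ^ 2 = cs * (1 - s ^ 2) := by rw [hw2]
    nlinarith [h3, h4, mul_pos (by linarith : (0:ℝ) < 1 - a)
        (by nlinarith : (0:ℝ) < 1 - a ^ 2),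
      mul_nonneg hcspos.le (by nlinarith : (0:ℝ) ≤ s ^ 2 - a ^ 2)]
  have hstep1 : w * (a * (1 - cs ^ 2) + cs * w * A) < (1 + cs) * (A - a * cs * w) := by
    have hPpos : 0 < A + a * cs * w := by
      nlinarith [mul_nonneg (mul_nonneg ha0 hcspos.le) hwpos.le]
    have hid : (A + a * cs * w) * ((1 + cs) * (A - a * cs * w)
          - w * (a * (1 - cs ^ 2) + cs * w * A))
        = (1 - s ^ 2 * cs ^ 2) * ((1 + cs) * (1 - a ^ 2) - w * (a * A + cs * w)) := by
      linear_combination (1 + cs - w ^ 2 * cs) * hA2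
        + (cs * a ^ 2 - cs ^ 3 * a ^ 2 - a ^ 2 * cs - a ^ 2 * cs ^ 2
            - A * w * a * cs ^ 2) * hw2
    nlinarith [mul_pos hDpos hcore, hPpos]
  have hmain : w ^ 2 * cs / (1 + cs) < 1 - a / sr := by
    have e1 : 1 - a / sr
        = ((a * (1 - cs ^ 2) + cs * w * A) - a * (1 - s ^ 2 * cs ^ 2))
          / (a * (1 - cs ^ 2) + cs * w * A) := by
      rw [hsr]; field_simp
    rw [e1, div_lt_div_iff₀ h1cs hNpos]
    calc w ^ 2 * cs * (a * (1 - cs ^ 2) + cs * w * A)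
        = cs * w * (w * (a * (1 - cs ^ 2) + cs * w * A)) := by ring
      _ < cs * w * ((1 + cs) * (A - a * cs * w)) :=
          mul_lt_mul_of_pos_left hstep1 (mul_pos hcspos hwpos)
      _ = (a * (1 - cs ^ 2) + cs * w * A - a * (1 - s ^ 2 * cs ^ 2)) * (1 + cs) := by
          linear_combination (-(a * cs ^ 2 * (1 + cs))) * hw2
  refine ⟨hsrpos, ?_, hmain, div_pos (mul_pos (pow_pos hwpos 2) hcspos) h1cs⟩
  gcongr

set_option maxHeartbeats 1000000 in
/-- For a primitive state with sound speed c_s, Lorentz factor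
W and spectral radius ϱ₁, for every α ≥ ϱ₁ one has
1 ± v₁/α ≥ 1 − |v₁|/α ≥ 1 − |v₁|/ϱ₁ > W⁻²c_s/(1 + c_s) > 0. -/
theorem one_minus_velocity_over_alpha_bound
    (d : ℕ) (hd : 0 < d) (Γ ρ p : ℝ)
    (hΓ1 : 1 < Γ) (hΓ2 : Γ ≤ 2) (hρ : 0 < ρ) (hp : 0 < p)
    (v : EuclideanSpace ℝ (Fin d)) (hv : ‖v‖ < 1)
    (e h W cs sr : ℝ)
    (he : e = p / ((Γ - 1) * ρ))
    (hh : h = 1 + e + p / ρ)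
    (hW : W = 1 / Real.sqrt (1 - ‖v‖ ^ 2))
    (hcs : cs = Real.sqrt (Γ * p / (ρ * h)))
    (hsr : sr = (|v ⟨0, hd⟩| * (1 - cs ^ 2)
        + cs * W⁻¹ * Real.sqrt (1 - (v ⟨0, hd⟩) ^ 2 - (‖v‖ ^ 2 - (v ⟨0, hd⟩) ^ 2) * cs ^ 2))
        / (1 - ‖v‖ ^ 2 * cs ^ 2))
    (α : ℝ) (hα : sr ≤ α) :
    (1 + v ⟨0, hd⟩ / α ≥ 1 - |v ⟨0, hd⟩| / α) ∧
    (1 - v ⟨0, hd⟩ / α ≥ 1 - |v ⟨0, hd⟩| / α) ∧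
    (1 - |v ⟨0, hd⟩| / α ≥ 1 - |v ⟨0, hd⟩| / sr) ∧
    (1 - |v ⟨0, hd⟩| / sr > W⁻¹ ^ 2 * cs / (1 + cs)) ∧
    (0 < W⁻¹ ^ 2 * cs / (1 + cs)) := by
  have hus : |v ⟨0, hd⟩| ≤ ‖v‖ := by
    rw [EuclideanSpace.norm_eq]
    rw [show |v ⟨0, hd⟩| = Real.sqrt (‖v ⟨0, hd⟩‖ ^ 2) by
      rw [Real.norm_eq_abs, Real.sqrt_sq_eq_abs, abs_abs]]
    apply Real.sqrt_le_sqrt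
    exact Finset.single_le_sum (f := fun j => ‖v j‖ ^ 2)
      (fun j _ => sq_nonneg _) (Finset.mem_univ _)
  have hs0 : (0:ℝ) ≤ ‖v‖ := norm_nonneg v
  have hw2 : W⁻¹ ^ 2 = 1 - ‖v‖ ^ 2 := by
    rw [hW, one_div, inv_inv]
    exact Real.sq_sqrt (by nlinarith)
  have hwpos : 0 < W⁻¹ := by
    rw [hW, one_div, inv_inv]
    exact Real.sqrt_pos.mpr (by nlinarith)
  have hΓ1' : 0 < Γ - 1 := by linarith
  have hhpos : 0 < h := by rw [hh, he]; positivity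
  have hcs2 : cs ^ 2 = Γ * p / (ρ * h) := by
    rw [hcs]; exact Real.sq_sqrt (by positivity)
  have hcspos : 0 < cs := by rw [hcs]; exact Real.sqrt_pos.mpr (by positivity)
  have hcs1 : cs < 1 := by
    have hrh : ρ * h = ρ + p / (Γ - 1) + p := by
      rw [hh, he]; field_simp
    have hq : p / (Γ - 1) * (Γ - 1) = p := div_mul_cancel₀ p (ne_of_gt hΓ1')
    have hqpos : 0 < p / (Γ - 1) := by positivity
    have hkey : Γ * p < ρ * h := by
      rw [hrh]
      nlinarith [mul_nonneg hqpos.le (mul_nonneg (by linarith : (0:ℝ) ≤ 2 - Γ)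
        (by linarith : (0:ℝ) ≤ Γ))]
    have hsq : cs ^ 2 < 1 := by
      rw [hcs2, div_lt_one (by positivity)]; exact hkey
    nlinarith
  have hRpos : 0 < 1 - (v ⟨0, hd⟩) ^ 2 - (‖v‖ ^ 2 - (v ⟨0, hd⟩) ^ 2) * cs ^ 2 := by
    have h1 : (v ⟨0, hd⟩) ^ 2 ≤ ‖v‖ ^ 2 := by
      rw [← sq_abs (v ⟨0, hd⟩)]; nlinarith [abs_nonneg (v ⟨0, hd⟩)]
    nlinarith [mul_nonneg (by linarith : (0:ℝ) ≤ ‖v‖ ^ 2 - (v ⟨0, hd⟩) ^ 2)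
      (by nlinarith : (0:ℝ) ≤ 1 - cs ^ 2)]
  have hA2 : (Real.sqrt (1 - (v ⟨0, hd⟩) ^ 2 - (‖v‖ ^ 2 - (v ⟨0, hd⟩) ^ 2) * cs ^ 2)) ^ 2
      = 1 - |v ⟨0, hd⟩| ^ 2 - (‖v‖ ^ 2 - |v ⟨0, hd⟩| ^ 2) * cs ^ 2 := by
    rw [Real.sq_sqrt hRpos.le, sq_abs]
  have hApos : 0 < Real.sqrt (1 - (v ⟨0, hd⟩) ^ 2 - (‖v‖ ^ 2 - (v ⟨0, hd⟩) ^ 2) * cs ^ 2) :=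
    Real.sqrt_pos.mpr hRpos
  obtain ⟨hsrpos, hdiv, hmain, hpos5⟩ := aux_spectral_bound (|v ⟨0, hd⟩|) ‖v‖ W⁻¹ cs
    (Real.sqrt (1 - (v ⟨0, hd⟩) ^ 2 - (‖v‖ ^ 2 - (v ⟨0, hd⟩) ^ 2) * cs ^ 2)) sr α
    (abs_nonneg _) hus hv hw2 hwpos hcspos hcs1 hA2 hApos hsr hα
  have hαpos : 0 < α := lt_of_lt_of_le hsrpos hα
  refine ⟨?_, ?_, by linarith, hmain, hpos5⟩
  · have h1' : -|v ⟨0, hd⟩| ≤ v ⟨0, hd⟩ := neg_abs_le _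
    have h2' : -|v ⟨0, hd⟩| / α ≤ v ⟨0, hd⟩ / α := by gcongr
    rw [neg_div] at h2'
    linarith
  · have h1' : v ⟨0, hd⟩ ≤ |v ⟨0, hd⟩| := le_abs_self _
    have h2' : v ⟨0, hd⟩ / α ≤ |v ⟨0, hd⟩| / α := by gcongr
    linarith
end

section
/- Let (ρ, p, v) be a primitive state with adiabatic index Γ ∈ (1,2], sound speed c_s = √(Γp/(ρh)), Lorentz factor W = (1−|v|²)^{−1/2}, and spectral radius ϱ₁ = (|v₁|(1−c_s²) + c_s W^{−1}√(1 − v₁² − (|v|²−v₁²)c_s²)) / (1 − |v|²c_s²). Then ϱ₁ is a root of the quadratic (1 − |v|²c_s²)x² − 2|v₁|(1 − c_s²)x + v₁²(1−c_s²) − c_s²(1−|v|²) = 0, and it satisfies the identity (1 − ϱ₁²)c_s² = W²(ϱ₁ − |v₁|)²(1 − c_s²). -/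
set_option maxHeartbeats 1000000


/-- The spectral radius ϱ₁ is a root of the quadratic
(1 − ‖v‖²c_s²)x² − 2|v₁|(1 − c_s²)x + v₁²(1 − c_s²) − c_s²(1 − ‖v‖²) = 0
and satisfies (1 − ϱ₁²)c_s² = W²(ϱ₁ − |v₁|)²(1 − c_s²). -/
theorem spectral_radius_quadratic_identity
    (d : ℕ) (hd : 0 < d) (Γ ρ p : ℝ)
    (hΓ1 : 1 < Γ) (hΓ2 : Γ ≤ 2) (hρ : 0 < ρ) (hp : 0 < p)
    (v : EuclideanSpace ℝ (Fin d)) (hv : ‖v‖ < 1)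
    (e h W cs sr : ℝ)
    (he : e = p / ((Γ - 1) * ρ))
    (hh : h = 1 + e + p / ρ)
    (hW : W = 1 / Real.sqrt (1 - ‖v‖ ^ 2))
    (hcs : cs = Real.sqrt (Γ * p / (ρ * h)))
    (hsr : sr = (|v ⟨0, hd⟩| * (1 - cs ^ 2)
        + cs * W⁻¹ * Real.sqrt (1 - (v ⟨0, hd⟩) ^ 2 - (‖v‖ ^ 2 - (v ⟨0, hd⟩) ^ 2) * cs ^ 2))
        / (1 - ‖v‖ ^ 2 * cs ^ 2)) :
    (1 - ‖v‖ ^ 2 * cs ^ 2) * sr ^ 2 - 2 * |v ⟨0, hd⟩| * (1 - cs ^ 2) * sr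
        + (v ⟨0, hd⟩) ^ 2 * (1 - cs ^ 2) - cs ^ 2 * (1 - ‖v‖ ^ 2) = 0 ∧
    (1 - sr ^ 2) * cs ^ 2 = W ^ 2 * (sr - |v ⟨0, hd⟩|) ^ 2 * (1 - cs ^ 2) := by
  set v1 : ℝ := v ⟨0, hd⟩ with hv1def
  set a : ℝ := |v1| with hadef
  have ha2 : a ^ 2 = v1 ^ 2 := sq_abs v1
  have hV0 : (0:ℝ) ≤ ‖v‖ := norm_nonneg v
  have hV2 : ‖v‖ ^ 2 < 1 := by nlinarith
  -- v1² ≤ ‖v‖²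
  have hnorm : ‖v‖ ^ 2 = ∑ i, (v i) ^ 2 := by
    rw [EuclideanSpace.norm_eq, Real.sq_sqrt (by positivity)]
    simp [sq_abs]
  have hv1le : v1 ^ 2 ≤ ‖v‖ ^ 2 := by
    rw [hnorm]
    exact Finset.single_le_sum (fun i _ => sq_nonneg (v i)) (Finset.mem_univ _)
  -- enthalpy positive
  have hΓ1' : (0:ℝ) < Γ - 1 := by linarith
  have hhpos : 0 < h := by
    rw [hh, he]; positivity
  -- sound speed facts
  have hcs0 : 0 ≤ cs := hcs ▸ Real.sqrt_nonneg _
  have hcs2 : cs ^ 2 = Γ * p / (ρ * h) := by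
    rw [hcs, Real.sq_sqrt (by positivity)]
  have hcs2le : cs ^ 2 ≤ 1 := by
    rw [hcs2, div_le_one (by positivity)]
    rw [hh, he]
    have h1 : ρ * (1 + p / ((Γ - 1) * ρ) + p / ρ) = ρ + p / (Γ - 1) + p := by
      field_simp
    rw [h1]
    have h2 : (Γ - 1) * p ≤ p / (Γ - 1) := by
      rw [le_div_iff₀ hΓ1']
      nlinarith [mul_nonneg (mul_nonneg (sub_nonneg.mpr hΓ2) hΓ1'.le) hp.le]
    nlinarith
  -- denominator positive
  have hA : 0 < 1 - ‖v‖ ^ 2 * cs ^ 2 := by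
    have h3 : ‖v‖ ^ 2 * cs ^ 2 ≤ ‖v‖ ^ 2 * 1 :=
      mul_le_mul_of_nonneg_left hcs2le (sq_nonneg _)
    nlinarith
  have hAne : (1 - ‖v‖ ^ 2 * cs ^ 2) ≠ 0 := ne_of_gt hA
  -- W facts
  have h1V : (0:ℝ) < 1 - ‖v‖ ^ 2 := by linarith
  have hsq : Real.sqrt (1 - ‖v‖ ^ 2) ≠ 0 := by positivity
  have hWinv : W⁻¹ = Real.sqrt (1 - ‖v‖ ^ 2) := by
    rw [hW, one_div, inv_inv]
  have hW2 : W ^ 2 * (1 - ‖v‖ ^ 2) = 1 := by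
    rw [hW]
    rw [div_pow, one_pow, Real.sq_sqrt (le_of_lt h1V)]
    field_simp
  -- the discriminant term
  set D : ℝ := 1 - v1 ^ 2 - (‖v‖ ^ 2 - v1 ^ 2) * cs ^ 2 with hDdef
  have hD0 : 0 ≤ D := by
    have h3 : (‖v‖ ^ 2 - v1 ^ 2) * cs ^ 2 ≤ (‖v‖ ^ 2 - v1 ^ 2) * 1 :=
      mul_le_mul_of_nonneg_left hcs2le (by linarith)
    rw [hDdef]; linarith
  set S : ℝ := cs * W⁻¹ * Real.sqrt D with hSdef
  have hS2 : S ^ 2 = cs ^ 2 * (1 - ‖v‖ ^ 2) * D := by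
    rw [hSdef, hWinv, mul_pow, mul_pow, Real.sq_sqrt (le_of_lt h1V), Real.sq_sqrt hD0]
  have key : (1 - ‖v‖ ^ 2 * cs ^ 2) * sr = a * (1 - cs ^ 2) + S := by
    rw [hsr]; field_simp
  have hG1 : (1 - ‖v‖ ^ 2 * cs ^ 2) * sr ^ 2 - 2 * a * (1 - cs ^ 2) * sr
      + v1 ^ 2 * (1 - cs ^ 2) - cs ^ 2 * (1 - ‖v‖ ^ 2) = 0 := by
    have hmul : (1 - ‖v‖ ^ 2 * cs ^ 2) * ((1 - ‖v‖ ^ 2 * cs ^ 2) * sr ^ 2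
        - 2 * a * (1 - cs ^ 2) * sr + v1 ^ 2 * (1 - cs ^ 2) - cs ^ 2 * (1 - ‖v‖ ^ 2))
        = 0 := by
      linear_combination ((1 - ‖v‖ ^ 2 * cs ^ 2) * sr - a * (1 - cs ^ 2) + S) * key
        + hS2 - (1 - cs ^ 2) ^ 2 * ha2
    exact (mul_eq_zero.mp hmul).resolve_left hAne
  refine ⟨hG1, ?_⟩
  linear_combination (-(1 - sr ^ 2) * cs ^ 2) * hW2 - W ^ 2 * hG1 - W ^ 2 * (1 - cs ^ 2) * ha2
end

section
/- For every primitive state (ρ, p, v) with adiabatic index Γ ∈ (1,2], the spectral radius ϱ₁ = (|v₁|(1−c_s²) + c_s W^{−1}√(1 − v₁² − (|v|²−v₁²)c_s²)) / (1 − |v|²c_s²) satisfies 0 < ϱ₁ < 1; that is, the largest characteristic speed of the relativistic hydrodynamics system is strictly less than the speed of light. -/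
set_option maxHeartbeats 1000000


/-- For every primitive state with Γ ∈ (1,2], the spectral
radius ϱ₁ satisfies 0 < ϱ₁ < 1: the largest characteristic speed is
strictly less than the speed of light. -/
theorem spectral_radius_less_than_light_speed
    (d : ℕ) (hd : 0 < d) (Γ ρ p : ℝ)
    (hΓ1 : 1 < Γ) (hΓ2 : Γ ≤ 2) (hρ : 0 < ρ) (hp : 0 < p)
    (v : EuclideanSpace ℝ (Fin d)) (hv : ‖v‖ < 1)
    (e h W cs sr : ℝ)
    (he : e = p / ((Γ - 1) * ρ))
    (hh : h = 1 + e + p / ρ)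
    (hW : W = 1 / Real.sqrt (1 - ‖v‖ ^ 2))
    (hcs : cs = Real.sqrt (Γ * p / (ρ * h)))
    (hsr : sr = (|v ⟨0, hd⟩| * (1 - cs ^ 2)
        + cs * W⁻¹ * Real.sqrt (1 - (v ⟨0, hd⟩) ^ 2 - (‖v‖ ^ 2 - (v ⟨0, hd⟩) ^ 2) * cs ^ 2))
        / (1 - ‖v‖ ^ 2 * cs ^ 2)) :
    0 < sr ∧ sr < 1 := by
  set a : ℝ := |v ⟨0, hd⟩| with ha_def
  set V : ℝ := ‖v‖ with hV_def
  have hV0 : 0 ≤ V := norm_nonneg v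
  have ha0 : 0 ≤ a := abs_nonneg _
  -- a ≤ V
  have haV : a ≤ V := by
    have h1 : V ^ 2 = ∑ i, ‖v i‖ ^ 2 := by
      rw [hV_def, EuclideanSpace.norm_eq]
      rw [Real.sq_sqrt (Finset.sum_nonneg fun i _ => sq_nonneg _)]
    have h2 : ‖v ⟨0, hd⟩‖ ^ 2 ≤ ∑ i, ‖v i‖ ^ 2 :=
      Finset.single_le_sum (fun i _ => sq_nonneg ‖v i‖) (Finset.mem_univ _)
    have h3 : a ^ 2 ≤ V ^ 2 := by
      rw [h1]
      simpa [ha_def, Real.norm_eq_abs, sq_abs] using h2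
    nlinarith
  have ha1 : a < 1 := lt_of_le_of_lt haV hv
  -- enthalpy positivity
  have hΓρ : 0 < (Γ - 1) * ρ := mul_pos (by linarith) hρ
  have he0 : 0 < e := he ▸ div_pos hp hΓρ
  have hh0 : 0 < h := by
    have : 0 < p / ρ := div_pos hp hρ
    rw [hh]; linarith
  have hΓne : Γ - 1 ≠ 0 := by linarith
  have hρh : ρ * h = ρ + p / (Γ - 1) + p := by
    rw [hh, he]; field_simp
  -- sound speed
  have hcs0 : 0 < Γ * p / (ρ * h) := div_pos (mul_pos (by linarith) hp) (mul_pos hρ hh0)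
  have hcspos : 0 < cs := hcs ▸ Real.sqrt_pos.mpr hcs0
  have hcs2 : cs ^ 2 = Γ * p / (ρ * h) := by
    rw [hcs, Real.sq_sqrt hcs0.le]
  have hcslt : cs ^ 2 < 1 := by
    rw [hcs2, div_lt_one (mul_pos hρ hh0), hρh]
    have h4 : (Γ - 1) * (p / (Γ - 1)) = p := by field_simp
    nlinarith [div_pos hp (show (0:ℝ) < Γ - 1 by linarith)]
  have hcs1 : cs < 1 := by nlinarith
  -- W⁻¹
  have hV2 : V ^ 2 < 1 := by nlinarith
  have hQpos : 0 < Real.sqrt (1 - V ^ 2) := Real.sqrt_pos.mpr (by linarith)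
  have hWinv : W⁻¹ = Real.sqrt (1 - V ^ 2) := by
    rw [hW, one_div, inv_inv]
  set Q : ℝ := Real.sqrt (1 - V ^ 2) with hQ_def
  have hQ2 : Q ^ 2 = 1 - V ^ 2 := Real.sq_sqrt (by linarith)
  -- inner radicand
  have hva2 : (v ⟨0, hd⟩) ^ 2 = a ^ 2 := (sq_abs _).symm
  rw [hva2] at hsr
  clear_value a V
  clear hv hW hcs he hh ha_def hV_def hva2 v
  have hrad0 : 0 < 1 - a ^ 2 - (V ^ 2 - a ^ 2) * cs ^ 2 := by
    have h5 : 0 ≤ V ^ 2 - a ^ 2 := by nlinarith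
    nlinarith
  set S : ℝ := Real.sqrt (1 - a ^ 2 - (V ^ 2 - a ^ 2) * cs ^ 2) with hS_def
  have hSpos : 0 < S := Real.sqrt_pos.mpr hrad0
  have hS2 : S ^ 2 = 1 - a ^ 2 - (V ^ 2 - a ^ 2) * cs ^ 2 := Real.sq_sqrt hrad0.le
  -- denominator
  have hden : 0 < 1 - V ^ 2 * cs ^ 2 := by nlinarith
  have hsr' : sr = (a * (1 - cs ^ 2) + cs * Q * S) / (1 - V ^ 2 * cs ^ 2) := by
    rw [hsr, hWinv]
  -- positivity
  have hnum : 0 < a * (1 - cs ^ 2) + cs * Q * S := by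
    have : 0 < cs * Q * S := mul_pos (mul_pos hcspos hQpos) hSpos
    nlinarith
  constructor
  · rw [hsr']; exact div_pos hnum hden
  · rw [hsr', div_lt_one hden]
    have hR : 0 < 1 - V ^ 2 * cs ^ 2 - a * (1 - cs ^ 2) := by nlinarith
    have hkey : (cs * Q * S) ^ 2 < (1 - V ^ 2 * cs ^ 2 - a * (1 - cs ^ 2)) ^ 2 := by
      have hid : (1 - V ^ 2 * cs ^ 2 - a * (1 - cs ^ 2)) ^ 2 - (cs * Q * S) ^ 2
          = (1 - a) ^ 2 * (1 - cs ^ 2) * (1 - V ^ 2 * cs ^ 2) := by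
        have e1 : Q ^ 2 * S ^ 2 = (1 - V ^ 2) * (1 - a ^ 2 - (V ^ 2 - a ^ 2) * cs ^ 2) := by
          rw [hQ2, hS2]
        nlinarith [e1]
      nlinarith [mul_pos (mul_pos (mul_pos (show (0:ℝ) < (1-a) by linarith)
        (show (0:ℝ) < (1-a) by linarith)) (show (0:ℝ) < 1 - cs^2 by linarith)) hden]
    have : cs * Q * S < 1 - V ^ 2 * cs ^ 2 - a * (1 - cs ^ 2) :=
      lt_of_pow_lt_pow_left₀ 2 hR.le hkey
    linarith
end

section
/- Let (ρ, p, v) be a primitive state with conservative state U = (D, m, E), and let α ≥ ϱ₁ where ϱ₁ is the spectral radius in the x₁-direction. Define D^± = D(1 ± v₁/α) and E^± = E ± m₁/α. Then D^± > 0 and E^± > 0 (for both choices of sign); in fact E^± > p·(1 − √(Γ−1))/(Γ − 1 + √(Γ−1)) ≥ 0. -/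
/-!
With `a = |v₁|`, `u = W⁻¹ = √(1 - |v|²)` and `r` the second square root in `ϱ₁`, one has
`ϱ₁ - a = c_s u (r - a c_s u) / (1 - |v|² c_s²)`. Since `r ≥ u` and `c_s < s := √(Γ - 1)`, this
exceeds `u² c_s² / (s (1 + s))`. As `ϱ₁ ≤ 1`, any `α ≥ ϱ₁` gives
`1 - a/α ≥ 1 - a/ϱ₁ ≥ ϱ₁ - a`, and `E^± ≥ ρhW² (1 - a/α) - p`. Finally `ρh c_s² = Γp = (1 + s²) p`
turns `ρhW² u² c_s² / (s (1 + s)) - p` into `p (1 - s) / (s² + s)`.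
-/

open Real

/-- The spectral radius `ϱ₁` written in terms of `a = |v₁|`, `b = |v|` and `c = c_s`,
using `W⁻¹ = √(1 - |v|²)`. -/
noncomputable def rhdSpectralRadius (a b c : ℝ) : ℝ :=
  (a * (1 - c ^ 2) + c * √(1 - b ^ 2) * √(1 - a ^ 2 - (b ^ 2 - a ^ 2) * c ^ 2)) /
    (1 - b ^ 2 * c ^ 2)

lemma rhdSpectralRadius_sub_eq {a b c : ℝ} (hb : b ^ 2 ≤ 1) (hbc : 1 - b ^ 2 * c ^ 2 ≠ 0) :
    rhdSpectralRadius a b c - a =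
      c * √(1 - b ^ 2) * (√(1 - a ^ 2 - (b ^ 2 - a ^ 2) * c ^ 2) - a * c * √(1 - b ^ 2)) /
        (1 - b ^ 2 * c ^ 2) := by
  have hu : √(1 - b ^ 2) ^ 2 = 1 - b ^ 2 := sq_sqrt (by linarith)
  rw [rhdSpectralRadius, eq_div_iff hbc, sub_mul, div_mul_cancel₀ _ hbc]
  linear_combination a * c ^ 2 * hu

lemma sq_mul_div_lt_rhdSpectralRadius_sub {a b c s : ℝ} (ha : 0 ≤ a) (hab : a ≤ b) (hb : b < 1)
    (hc : 0 < c) (hc1 : c ≤ 1) (hcs : c < s) :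
    (1 - b ^ 2) * c ^ 2 / (s * (1 + s)) < rhdSpectralRadius a b c - a := by
  have hs : 0 < s := hc.trans hcs
  have hab2 : a ^ 2 ≤ b ^ 2 := pow_le_pow_left₀ ha hab 2
  have hb2 : b ^ 2 < 1 := by nlinarith
  have hc2 : c ^ 2 ≤ 1 := pow_le_one₀ hc.le hc1
  have hden : 0 < 1 - b ^ 2 * c ^ 2 := by nlinarith
  rw [rhdSpectralRadius_sub_eq hb2.le hden.ne', div_lt_div_iff₀ (by positivity) hden]
  set u := √(1 - b ^ 2)
  set r := √(1 - a ^ 2 - (b ^ 2 - a ^ 2) * c ^ 2)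
  have hu2 : u ^ 2 = 1 - b ^ 2 := sq_sqrt (by linarith)
  have hu : 0 < u := sqrt_pos.2 (by linarith)
  have hur : u ≤ r :=
    sqrt_le_sqrt (by nlinarith [mul_nonneg (sub_nonneg.2 hab2) (sub_nonneg.2 hc2)])
  have hr : u * (1 - b * c) ≤ r - a * c * u := by nlinarith [mul_pos hu hc]
  have hspeed : c * (1 + b * c) < s * (1 + s) := by nlinarith
  have key : c * u * (1 - b ^ 2 * c ^ 2) < s * (1 + s) * (r - a * c * u) :=
    calc c * u * (1 - b ^ 2 * c ^ 2) = c * (1 + b * c) * (u * (1 - b * c)) := by ring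
      _ < s * (1 + s) * (u * (1 - b * c)) :=
        mul_lt_mul_of_pos_right hspeed (mul_pos hu (by nlinarith))
      _ ≤ s * (1 + s) * (r - a * c * u) := by gcongr
  rw [← hu2]
  nlinarith [mul_lt_mul_of_pos_left key (mul_pos hc hu)]

lemma lt_rhdSpectralRadius {a b c : ℝ} (ha : 0 ≤ a) (hab : a ≤ b) (hb : b < 1)
    (hc : 0 < c) (hc1 : c < 1) : a < rhdSpectralRadius a b c := by
  have hlt := sq_mul_div_lt_rhdSpectralRadius_sub ha hab hb hc hc1.le hc1
  have hnonneg : 0 ≤ (1 - b ^ 2) * c ^ 2 / (1 * (1 + 1)) :=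
    div_nonneg (mul_nonneg (by nlinarith) (sq_nonneg c)) (by norm_num)
  linarith

lemma rhdSpectralRadius_le_one {a b c : ℝ} (ha : 0 ≤ a) (hab : a ≤ b) (hb : b < 1)
    (hc : 0 ≤ c) (hc1 : c ≤ 1) : rhdSpectralRadius a b c ≤ 1 := by
  have hc2 : c ^ 2 ≤ 1 := pow_le_one₀ hc hc1
  have hb2 : b ^ 2 < 1 := by nlinarith
  have hden : 0 < 1 - b ^ 2 * c ^ 2 := by nlinarith
  have hX : 0 < 1 - b ^ 2 * c ^ 2 - a * (1 - c ^ 2) := by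
    have hbX : 0 < (1 - b) * (1 + b * c ^ 2) :=
      mul_pos (by linarith) (by nlinarith [mul_nonneg (ha.trans hab) (sq_nonneg c)])
    nlinarith [mul_le_mul_of_nonneg_right hab (sub_nonneg.2 hc2)]
  set X := 1 - b ^ 2 * c ^ 2 - a * (1 - c ^ 2)
  have hu2 : √(1 - b ^ 2) ^ 2 = 1 - b ^ 2 := sq_sqrt (by nlinarith)
  have hr2 : √(1 - a ^ 2 - (b ^ 2 - a ^ 2) * c ^ 2) ^ 2 = 1 - a ^ 2 - (b ^ 2 - a ^ 2) * c ^ 2 :=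
    sq_sqrt (by nlinarith)
  -- `X² - (c u r)² = (1 - a)² (1 - c²) (1 - b² c²) ≥ 0`
  have hsq : (c * √(1 - b ^ 2) * √(1 - a ^ 2 - (b ^ 2 - a ^ 2) * c ^ 2)) ^ 2 ≤ X ^ 2 := by
    rw [mul_pow, mul_pow, hu2, hr2]
    nlinarith [mul_nonneg (mul_nonneg (sq_nonneg (1 - a)) (sub_nonneg.2 hc2)) hden.le]
  rw [rhdSpectralRadius, div_le_one hden]
  linarith [le_of_sq_le_sq hsq hX.le]

lemma sub_le_one_sub_div {a σ α : ℝ} (ha : 0 ≤ a) (haσ : a ≤ σ) (hσ1 : σ ≤ 1) (hσα : σ ≤ α) :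
    σ - a ≤ 1 - a / α := by
  rcases ha.eq_or_lt with rfl | ha
  · simpa using hσ1
  have hσ : 0 < σ := ha.trans_le haσ
  have hασ : a / α ≤ a / σ := div_le_div_of_nonneg_left ha.le hσ hσα
  have hσa : a / σ ≤ 1 + a - σ := by
    rw [div_le_iff₀ hσ]
    nlinarith
  linarith

lemma lt_rhdSpectralRadius_and_sq_mul_div_lt_one_sub_div {a b c s α : ℝ} (ha : 0 ≤ a)
    (hab : a ≤ b) (hb : b < 1) (hc : 0 < c) (hcs : c < s) (hs1 : s ≤ 1)
    (hα : rhdSpectralRadius a b c ≤ α) :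
    a < α ∧ (1 - b ^ 2) * c ^ 2 / (s * (1 + s)) < 1 - a / α := by
  have hc1 : c < 1 := hcs.trans_le hs1
  have ha_lt := lt_rhdSpectralRadius ha hab hb hc hc1
  exact ⟨ha_lt.trans_le hα,
    (sq_mul_div_lt_rhdSpectralRadius_sub ha hab hb hc hc1.le hcs).trans_le <|
      sub_le_one_sub_div ha ha_lt.le (rhdSpectralRadius_le_one ha hab hb hc.le hc1.le) hα⟩

lemma mul_one_add_div_pos_and_mul_one_sub_div_pos {D x α : ℝ} (hD : 0 < D) (hx : |x| < α) :
    0 < D * (1 + x / α) ∧ 0 < D * (1 - x / α) := by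
  have hα : 0 < α := (abs_nonneg x).trans_lt hx
  obtain ⟨hneg, hpos⟩ :=
    abs_lt.1 (show |x / α| < 1 by rwa [abs_div, abs_of_pos hα, div_lt_one hα])
  exact ⟨mul_pos hD (by linarith), mul_pos hD (by linarith)⟩

lemma lt_add_div_and_lt_sub_div {Q p x a α κ B E m : ℝ} (hQ : 0 < Q) (hα : 0 < α)
    (hx : |x| ≤ a) (hκ : κ < 1 - a / α) (hB : Q * κ = B + p) (hE : E = Q - p) (hm : m = Q * x) :
    B < E + m / α ∧ B < E - m / α := by
  have hlower : B < Q - p - Q * (a / α) := by nlinarith [mul_lt_mul_of_pos_left hκ hQ]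
  have hshift : |Q * x / α| ≤ Q * (a / α) := by
    rw [abs_div, abs_mul, abs_of_pos hQ, abs_of_pos hα, mul_div_assoc]
    gcongr
  obtain ⟨hshift_neg, hshift_pos⟩ := abs_le.1 hshift
  rw [hE, hm]
  constructor <;> linarith

lemma idealGas_pos_and_soundSpeed_sq_lt {Γ ρ p h : ℝ} (hΓ : 1 < Γ) (hρ : 0 < ρ) (hp : 0 < p)
    (hh : h = 1 + p / ((Γ - 1) * ρ) + p / ρ) : 0 < ρ * h ∧ Γ * p / (ρ * h) < Γ - 1 := by
  have hΓ1 : 0 < Γ - 1 := sub_pos.2 hΓ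
  have hρh : ρ * h = ρ + Γ * p / (Γ - 1) := by
    rw [hh]
    field_simp
    ring
  have hcancel : (Γ - 1) * (Γ * p / (Γ - 1)) = Γ * p := mul_div_cancel₀ _ hΓ1.ne'
  have hpos : 0 < ρ * h := hρh ▸ add_pos hρ (div_pos (by positivity) hΓ1)
  refine ⟨hpos, ?_⟩
  rw [div_lt_iff₀ hpos, hρh]
  nlinarith

lemma mul_div_sqrt_sub_one_eq {Γ p : ℝ} (hΓ : 1 < Γ) :
    Γ * p / (√(Γ - 1) * (1 + √(Γ - 1))) = p * (1 - √(Γ - 1)) / (Γ - 1 + √(Γ - 1)) + p := by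
  have hs : 0 < √(Γ - 1) := sqrt_pos.2 (sub_pos.2 hΓ)
  have hs2 : √(Γ - 1) ^ 2 = Γ - 1 := sq_sqrt (sub_pos.2 hΓ).le
  rw [show Γ - 1 + √(Γ - 1) = √(Γ - 1) * (1 + √(Γ - 1)) by linear_combination -hs2]
  field_simp
  linear_combination (-p) * hs2

/-- With D^± = D(1 ± v₁/α) and E^± = E ± m₁/α for α ≥ ϱ₁,
one has D^± > 0 and E^± > 0; in fact
E^± > p(1 − √(Γ−1))/(Γ − 1 + √(Γ−1)) ≥ 0. -/
theorem positivity_of_shifted_density_and_energy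
    (d : ℕ) (hd : 0 < d) (Γ ρ p : ℝ)
    (hΓ1 : 1 < Γ) (hΓ2 : Γ ≤ 2) (hρ : 0 < ρ) (hp : 0 < p)
    (v : EuclideanSpace ℝ (Fin d)) (hv : ‖v‖ < 1)
    (e h W D E cs sr : ℝ) (m : EuclideanSpace ℝ (Fin d))
    (he : e = p / ((Γ - 1) * ρ))
    (hh : h = 1 + e + p / ρ)
    (hW : W = 1 / Real.sqrt (1 - ‖v‖ ^ 2))
    (hD : D = ρ * W)
    (hm : m = (ρ * h * W ^ 2) • v)
    (hE : E = ρ * h * W ^ 2 - p)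
    (hcs : cs = Real.sqrt (Γ * p / (ρ * h)))
    (hsr : sr = (|v ⟨0, hd⟩| * (1 - cs ^ 2)
        + cs * W⁻¹ * Real.sqrt (1 - (v ⟨0, hd⟩) ^ 2 - (‖v‖ ^ 2 - (v ⟨0, hd⟩) ^ 2) * cs ^ 2))
        / (1 - ‖v‖ ^ 2 * cs ^ 2))
    (α : ℝ) (hα : sr ≤ α) :
    0 < D * (1 + v ⟨0, hd⟩ / α) ∧
    0 < D * (1 - v ⟨0, hd⟩ / α) ∧
    E + m ⟨0, hd⟩ / α > p * (1 - Real.sqrt (Γ - 1)) / (Γ - 1 + Real.sqrt (Γ - 1)) ∧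
    E - m ⟨0, hd⟩ / α > p * (1 - Real.sqrt (Γ - 1)) / (Γ - 1 + Real.sqrt (Γ - 1)) ∧
    0 ≤ p * (1 - Real.sqrt (Γ - 1)) / (Γ - 1 + Real.sqrt (Γ - 1)) ∧
    0 < E + m ⟨0, hd⟩ / α ∧
    0 < E - m ⟨0, hd⟩ / α := by
  set v₀ := v ⟨0, hd⟩
  obtain ⟨hρh, hcs_sq_lt⟩ := idealGas_pos_and_soundSpeed_sq_lt hΓ1 hρ hp (he ▸ hh)
  have hcs_sq : cs ^ 2 = Γ * p / (ρ * h) := hcs ▸ sq_sqrt (by positivity)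
  have hcs_pos : 0 < cs := hcs ▸ sqrt_pos.2 (by positivity)
  have hcs_lt : cs < √(Γ - 1) := hcs ▸ sqrt_lt_sqrt (by positivity) hcs_sq_lt
  have hv₀ : |v₀| ≤ ‖v‖ := by simpa using PiLp.norm_apply_le v ⟨0, hd⟩
  have hsrα : rhdSpectralRadius |v₀| ‖v‖ cs ≤ α := by
    rwa [hsr, hW, one_div, inv_inv, ← sq_abs v₀] at hα
  obtain ⟨hvα, hκ⟩ := lt_rhdSpectralRadius_and_sq_mul_div_lt_one_sub_div (abs_nonneg _) hv₀ hv
    hcs_pos hcs_lt (sqrt_le_one.2 (by linarith)) hsrα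
  have hv2 : 0 < 1 - ‖v‖ ^ 2 := by nlinarith [norm_nonneg v]
  have hW₀ : 0 < W := hW ▸ div_pos one_pos (sqrt_pos.2 hv2)
  have hW2 : W ^ 2 * (1 - ‖v‖ ^ 2) = 1 := by
    rw [hW, div_pow, one_pow, sq_sqrt hv2.le, one_div_mul_cancel hv2.ne']
  have hB : ρ * h * W ^ 2 * ((1 - ‖v‖ ^ 2) * cs ^ 2 / (√(Γ - 1) * (1 + √(Γ - 1)))) =
      p * (1 - √(Γ - 1)) / (Γ - 1 + √(Γ - 1)) + p :=
    calc _ = ρ * h * cs ^ 2 * (W ^ 2 * (1 - ‖v‖ ^ 2)) / (√(Γ - 1) * (1 + √(Γ - 1))) := by ring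
      _ = Γ * p / (√(Γ - 1) * (1 + √(Γ - 1))) := by
        rw [hW2, mul_one, hcs_sq, mul_div_cancel₀ _ hρh.ne']
      _ = _ := mul_div_sqrt_sub_one_eq hΓ1
  have hbound : 0 ≤ p * (1 - √(Γ - 1)) / (Γ - 1 + √(Γ - 1)) :=
    div_nonneg (mul_nonneg hp.le (sub_nonneg.2 (sqrt_le_one.2 (by linarith))))
      (add_nonneg (by linarith) (sqrt_nonneg _))
  obtain ⟨hE_add, hE_sub⟩ := lt_add_div_and_lt_sub_div (by positivity)
    ((abs_nonneg _).trans_lt hvα) le_rfl hκ hB hE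
    (show m ⟨0, hd⟩ = ρ * h * W ^ 2 * v₀ by rw [hm]; rfl)
  obtain ⟨hD_add, hD_sub⟩ :=
    mul_one_add_div_pos_and_mul_one_sub_div_pos (hD ▸ mul_pos hρ hW₀) hvα
  exact ⟨hD_add, hD_sub, hE_add, hE_sub, hbound, hbound.trans_lt hE_add, hbound.trans_lt hE_sub⟩
end

section
/- Let (ρ, p, v) be a primitive state with conservative state U = (D, m, E), flux F₁(U) = (Dv₁, m₁v₁ + p, m₂v₁, …, m_d v₁, m₁), and spectral radius ϱ₁ in the x₁-direction. For α ≥ ϱ₁, write U ± α^{−1}F₁(U) = (D^±, m^±, E^±). Then (D^±)² + |m^±|² − (E^±)² < 0 (for both choices of sign). -/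
set_option maxHeartbeats 1000000 in
/-- Writing U ± α⁻¹F₁(U) = (D^±, m^±, E^±) for α ≥ ϱ₁, one has
(D^±)² + ‖m^±‖² − (E^±)² < 0 for both choices of sign. -/
theorem shifted_state_minkowski_inequality
    (d : ℕ) (hd : 0 < d) (Γ ρ p : ℝ)
    (hΓ1 : 1 < Γ) (hΓ2 : Γ ≤ 2) (hρ : 0 < ρ) (hp : 0 < p)
    (v : EuclideanSpace ℝ (Fin d)) (hv : ‖v‖ < 1)
    (e h W D E cs sr : ℝ) (m : EuclideanSpace ℝ (Fin d))
    (he : e = p / ((Γ - 1) * ρ))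
    (hh : h = 1 + e + p / ρ)
    (hW : W = 1 / Real.sqrt (1 - ‖v‖ ^ 2))
    (hD : D = ρ * W)
    (hm : m = (ρ * h * W ^ 2) • v)
    (hE : E = ρ * h * W ^ 2 - p)
    (hcs : cs = Real.sqrt (Γ * p / (ρ * h)))
    (hsr : sr = (|v ⟨0, hd⟩| * (1 - cs ^ 2)
        + cs * W⁻¹ * Real.sqrt (1 - (v ⟨0, hd⟩) ^ 2 - (‖v‖ ^ 2 - (v ⟨0, hd⟩) ^ 2) * cs ^ 2))
        / (1 - ‖v‖ ^ 2 * cs ^ 2))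
    (α : ℝ) (hα : sr ≤ α) :
    ((D + α⁻¹ * (D * v ⟨0, hd⟩)) ^ 2
        + ‖m + α⁻¹ • (v ⟨0, hd⟩ • m + p • (EuclideanSpace.single ⟨0, hd⟩ 1))‖ ^ 2
        - (E + α⁻¹ * (m ⟨0, hd⟩)) ^ 2 < 0) ∧
    ((D - α⁻¹ * (D * v ⟨0, hd⟩)) ^ 2
        + ‖m - α⁻¹ • (v ⟨0, hd⟩ • m + p • (EuclideanSpace.single ⟨0, hd⟩ 1))‖ ^ 2
        - (E - α⁻¹ * (m ⟨0, hd⟩)) ^ 2 < 0) := by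
  have hΓ0 : (0:ℝ) < Γ - 1 := by linarith
  have he0 : 0 < e := by rw [he]; positivity
  have hpe : p = (Γ - 1) * ρ * e := by rw [he]; field_simp
  have hh1 : h = 1 + Γ * e := by
    rw [hh, hpe]; field_simp; ring
  have hh0 : (1:ℝ) < h := by clear * - hh1 hΓ1 he0; nlinarith
  set v1 : ℝ := v ⟨0, hd⟩ with hv1def
  have hs0 : (0:ℝ) ≤ ‖v‖ ^ 2 := by positivity
  have hs1 : ‖v‖ ^ 2 < 1 := by clear * - hv; nlinarith [norm_nonneg v]
  have hv1abs : |v1| ≤ ‖v‖ := by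
    have h1 := abs_real_inner_le_norm v (EuclideanSpace.single (⟨0, hd⟩ : Fin d) (1:ℝ))
    rw [EuclideanSpace.inner_single_right] at h1
    simpa using h1
  have hv1s : v1 ^ 2 ≤ ‖v‖ ^ 2 := by
    clear * - hv1abs
    nlinarith [abs_nonneg v1, norm_nonneg v, sq_abs v1]
  set w : ℝ := Real.sqrt (1 - ‖v‖ ^ 2) with hwdef
  have hw0 : 0 < w := Real.sqrt_pos.2 (by linarith)
  have hw2 : w ^ 2 = 1 - ‖v‖ ^ 2 := Real.sq_sqrt (by linarith)
  have hWw : W * w = 1 := by rw [hW, one_div, inv_mul_cancel₀ hw0.ne']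
  have hW0 : 0 < W := by rw [hW]; exact one_div_pos.2 hw0
  have hWinv : W⁻¹ = w := by rw [hW, one_div, inv_inv]
  have hρh : 0 < ρ * h := mul_pos hρ (by linarith)
  have hcs2 : cs ^ 2 = Γ * p / (ρ * h) := by
    rw [hcs]; exact Real.sq_sqrt (by positivity)
  have hcs0 : 0 < cs := by rw [hcs]; apply Real.sqrt_pos.2; positivity
  have hcs2' : ρ * h * cs ^ 2 = Γ * p := by rw [hcs2]; field_simp
  have hcs1 : cs ^ 2 < 1 := by
    rw [hcs2, div_lt_one hρh, hpe, hh1]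
    clear * - hρ he0 hΓ1 hΓ2
    nlinarith [mul_nonneg (mul_nonneg (mul_nonneg hρ.le he0.le) (sub_nonneg.2 hΓ2))
      (by linarith : (0:ℝ) ≤ Γ)]
  set u : ℝ := |v1| with hudef
  have hu0 : (0:ℝ) ≤ u := abs_nonneg _
  have hu2 : u ^ 2 = v1 ^ 2 := sq_abs _
  have hus : u ^ 2 ≤ ‖v‖ ^ 2 := by rw [hu2]; exact hv1s
  set M : ℝ := 1 - ‖v‖ ^ 2 * cs ^ 2 with hMdef
  have hM0 : 0 < M := by
    rw [hMdef]
    clear * - hs0 hs1 hcs1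
    nlinarith [mul_le_of_le_one_right hs0 hcs1.le]
  set S : ℝ := 1 - v1 ^ 2 - (‖v‖ ^ 2 - v1 ^ 2) * cs ^ 2 with hSdef
  have hS0 : 0 < S := by
    rw [hSdef]
    clear * - hv1s hcs1 hs1
    nlinarith [mul_nonneg (sub_nonneg.2 hv1s) (sub_nonneg.2 hcs1.le)]
  set σ : ℝ := Real.sqrt S with hσdef
  have hσ2 : σ ^ 2 = 1 - u ^ 2 - (‖v‖ ^ 2 - u ^ 2) * cs ^ 2 := by
    rw [hσdef, Real.sq_sqrt hS0.le, hSdef, hu2]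
  have hσ0 : 0 < σ := Real.sqrt_pos.2 hS0
  rw [hWinv] at hsr
  have hsrM : sr * M = u * (1 - cs ^ 2) + cs * w * σ := by
    rw [hsr]; field_simp
  -- K and C
  set K : ℝ := (ρ ^ 2 * (h ^ 2 - 1) - 2 * ρ * h * p) * W ^ 2 with hKdef
  have hKcore : ρ ^ 2 * (h ^ 2 - 1) - 2 * ρ * h * p = ρ ^ 2 * e * (2 + Γ * (2 - Γ) * e) := by
    rw [hh1, hpe]; ring
  have hK0 : 0 < K := by
    rw [hKdef, hKcore]
    have h2 : (0:ℝ) < 2 + Γ * (2 - Γ) * e := by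
      clear * - hΓ1 hΓ2 he0
      nlinarith [mul_nonneg (mul_nonneg (by linarith : (0:ℝ) ≤ Γ)
        (by linarith : (0:ℝ) ≤ 2 - Γ)) he0.le]
    positivity
  set C : ℝ := K * cs ^ 2 * w ^ 2 - p ^ 2 * (1 - cs ^ 2) with hCdef
  have hCval : C * (ρ * h) = ρ ^ 3 * (Γ - 1) * e ^ 2 * ((Γ + 1) + Γ * (2 - Γ) * e) := by
    have h1 : C * (ρ * h)
        = ((ρ ^ 2 * (h ^ 2 - 1) - 2 * ρ * h * p) * (W * w) ^ 2) * (ρ * h * cs ^ 2)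
          - p ^ 2 * (ρ * h) + p ^ 2 * (ρ * h * cs ^ 2) := by
      rw [hCdef, hKdef]; ring
    rw [h1, hWw, hcs2', hKcore, hh1, hpe]; ring
  have hC0 : 0 < C := by
    have h2 : (0:ℝ) < ρ ^ 3 * (Γ - 1) * e ^ 2 * ((Γ + 1) + Γ * (2 - Γ) * e) := by
      have h3 : (0:ℝ) < (Γ + 1) + Γ * (2 - Γ) * e := by
        clear * - hΓ1 hΓ2 he0
        nlinarith [mul_nonneg (mul_nonneg (by linarith : (0:ℝ) ≤ Γ)
          (by linarith : (0:ℝ) ≤ 2 - Γ)) he0.le]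
      positivity
    clear * - hCval hρh h2; nlinarith [hCval, hρh]
  -- σ > u cs w
  have hσu : u * cs * w < σ := by
    have h3 : σ ^ 2 - (u * cs * w) ^ 2 = (1 - u ^ 2) * M := by
      rw [hσ2, hMdef]; linear_combination (-(u ^ 2 * cs ^ 2)) * hw2
    have h4 : (0:ℝ) < (1 - u ^ 2) * M :=
      mul_pos (by clear * - hus hs1; linarith) hM0
    exact lt_of_pow_lt_pow_left₀ 2 hσ0.le (by clear * - h3 h4; linarith)
  have hsru' : (sr - u) * M = cs * w * (σ - u * cs * w) := by
    linear_combination hsrM + u * cs ^ 2 * hw2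
  have hsru : u < sr := by
    clear * - hsru' hcs0 hw0 hσu hM0
    nlinarith [hsru', mul_pos (mul_pos hcs0 hw0) (sub_pos.2 hσu), hM0]
  have hsr0 : 0 < sr := hu0.trans_lt hsru
  have hα0 : 0 < α := hsr0.trans_le hα
  -- P(sr) > 0
  have keyid : ((K + p ^ 2) * (sr * M) ^ 2 - 2 * K * u * (sr * M) * M
      - (p ^ 2 - K * u ^ 2) * M ^ 2) = C * (σ - u * cs * w) ^ 2 := by
    rw [hsrM, hCdef, hMdef]
    linear_combination (p ^ 2 - cs ^ 2 * p ^ 2 + cs ^ 2 * w ^ 2 * p ^ 2) * hσ2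
      + (cs ^ 2 * p ^ 2 - cs ^ 4 * ‖v‖ ^ 2 * p ^ 2 + 2 * u * cs ^ 3 * w * σ * K
        - u ^ 2 * cs ^ 4 * K + u ^ 2 * cs ^ 4 * ‖v‖ ^ 2 * K - u ^ 2 * cs ^ 4 * w ^ 2 * K) * hw2
  have hPsr : 0 < (K + p ^ 2) * sr ^ 2 - 2 * K * u * sr - p ^ 2 + K * u ^ 2 := by
    have h4 : ((K + p ^ 2) * sr ^ 2 - 2 * K * u * sr - p ^ 2 + K * u ^ 2) * M ^ 2
        = C * (σ - u * cs * w) ^ 2 := by linear_combination keyid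
    have h5 : 0 < ((K + p ^ 2) * sr ^ 2 - 2 * K * u * sr - p ^ 2 + K * u ^ 2) * M ^ 2 := by
      rw [h4]; exact mul_pos hC0 (pow_pos (sub_pos.2 hσu) 2)
    clear * - h5 hM0
    nlinarith [h5, pow_pos hM0 2]
  -- main scalar inequality
  set A : ℝ := ρ * h * W ^ 2 with hAdef
  have hm1 : m ⟨0, hd⟩ = A * v1 := by rw [hm]; rfl
  have hα' : α ≠ 0 := ne_of_gt hα0
  have hinv : α⁻¹ * α = 1 := inv_mul_cancel₀ hα'
  have main : ∀ ε : ℝ, ε ^ 2 = 1 → 0 ≤ ε * v1 + u →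
      (D + ε * α⁻¹ * (D * v1)) ^ 2
      + (((1 + ε * α⁻¹ * v1) * A) ^ 2 * ‖v‖ ^ 2
        + 2 * ((1 + ε * α⁻¹ * v1) * A) * (ε * α⁻¹ * p) * v1 + (ε * α⁻¹ * p) ^ 2)
      - (E + ε * α⁻¹ * (A * v1)) ^ 2 < 0 := by
    intro ε hε2 hεv1
    have hP : 0 < (K + p ^ 2) * α ^ 2 - 2 * K * u * α - p ^ 2 + K * u ^ 2 := by
      have h5 : 0 ≤ (K + p ^ 2) * (α + sr) - 2 * K * u := by
        clear * - hK0 hsru hα hsr0 hu0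
        nlinarith [mul_pos hK0 (sub_pos.2 hsru), mul_nonneg (sq_nonneg p)
          (by linarith : (0:ℝ) ≤ α + sr), hα, hsr0]
      clear * - h5 hα hPsr
      nlinarith [mul_nonneg (sub_nonneg.2 hα) h5, hPsr]
    have hR : 0 < (K + p ^ 2) * α ^ 2 + 2 * K * ε * v1 * α + K * v1 ^ 2 - p ^ 2 := by
      clear * - hK0 hεv1 hα0 hP hu2
      nlinarith [mul_nonneg (mul_nonneg hK0.le hεv1) hα0.le, hP, hu2]
    have hid : ((D + ε * α⁻¹ * (D * v1)) ^ 2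
        + (((1 + ε * α⁻¹ * v1) * A) ^ 2 * ‖v‖ ^ 2
          + 2 * ((1 + ε * α⁻¹ * v1) * A) * (ε * α⁻¹ * p) * v1 + (ε * α⁻¹ * p) ^ 2)
        - (E + ε * α⁻¹ * (A * v1)) ^ 2) * α ^ 2
        = -((K + p ^ 2) * α ^ 2 + 2 * K * ε * v1 * α + K * v1 ^ 2 - p ^ 2) := by
      have hs' : ‖v‖ ^ 2 = 1 - w ^ 2 := by linarith
      rw [hD, hE, hAdef, hKdef, hs']
      linear_combination
        (ε ^ 2 * p ^ 2 + α * α⁻¹ * ε ^ 2 * p ^ 2 + 2 * ρ * W ^ 2 * ε ^ 2 * v1 ^ 2 * h * p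
          + 4 * ρ * W ^ 2 * α * ε * v1 * h * p + 2 * ρ * W ^ 2 * α * α⁻¹ * ε ^ 2 * v1 ^ 2 * h * p
          + ρ ^ 2 * W ^ 2 * ε ^ 2 * v1 ^ 2 + 2 * ρ ^ 2 * W ^ 2 * α * ε * v1
          + ρ ^ 2 * W ^ 2 * α * α⁻¹ * ε ^ 2 * v1 ^ 2
          - ρ ^ 2 * W ^ 4 * w ^ 2 * ε ^ 2 * v1 ^ 2 * h ^ 2
          - 2 * ρ ^ 2 * W ^ 4 * w ^ 2 * α * ε * v1 * h ^ 2
          - ρ ^ 2 * W ^ 4 * w ^ 2 * α * α⁻¹ * ε ^ 2 * v1 ^ 2 * h ^ 2) * hinv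
        + (p ^ 2 + 2 * ρ * W ^ 2 * v1 ^ 2 * h * p + ρ ^ 2 * W ^ 2 * v1 ^ 2
          - ρ ^ 2 * W ^ 4 * w ^ 2 * v1 ^ 2 * h ^ 2) * hε2
        + (-(ρ ^ 2 * W ^ 2 * v1 ^ 2 * h ^ 2) - 2 * ρ ^ 2 * W ^ 2 * α * ε * v1 * h ^ 2
          - ρ ^ 2 * W ^ 2 * α ^ 2 * h ^ 2 - ρ ^ 2 * W ^ 3 * w * v1 ^ 2 * h ^ 2
          - 2 * ρ ^ 2 * W ^ 3 * w * α * ε * v1 * h ^ 2 - ρ ^ 2 * W ^ 3 * w * α ^ 2 * h ^ 2) * hWw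
    have h7 : ((D + ε * α⁻¹ * (D * v1)) ^ 2
        + (((1 + ε * α⁻¹ * v1) * A) ^ 2 * ‖v‖ ^ 2
          + 2 * ((1 + ε * α⁻¹ * v1) * A) * (ε * α⁻¹ * p) * v1 + (ε * α⁻¹ * p) ^ 2)
        - (E + ε * α⁻¹ * (A * v1)) ^ 2) * α ^ 2 < 0 := by
      rw [hid]; clear * - hR; linarith
    exact Left.neg_of_mul_neg_left h7 (sq_nonneg α)
  have hnorm : ∀ a b : ℝ,
      ‖a • v + b • (EuclideanSpace.single (⟨0, hd⟩ : Fin d) (1:ℝ))‖ ^ 2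
        = a ^ 2 * ‖v‖ ^ 2 + 2 * a * b * v1 + b ^ 2 := by
    intro a b
    rw [norm_add_sq_real, real_inner_smul_left, real_inner_smul_right,
      EuclideanSpace.inner_single_right, norm_smul, norm_smul,
      EuclideanSpace.norm_single]
    simp [mul_pow, sq_abs]
    ring
  constructor
  · have h5 : m + α⁻¹ • (v1 • m + p • (EuclideanSpace.single (⟨0, hd⟩ : Fin d) (1:ℝ)))
        = ((1 + α⁻¹ * v1) * A) • v + (α⁻¹ * p) • (EuclideanSpace.single (⟨0, hd⟩ : Fin d) (1:ℝ)) := by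
      rw [hm]; module
    rw [h5, hnorm ((1 + α⁻¹ * v1) * A) (α⁻¹ * p), hm1]
    have h6 := main 1 (by norm_num) (by rw [hudef]; clear * -; nlinarith [neg_abs_le v1])
    clear * - h6
    linarith [h6]
  · have h5 : m - α⁻¹ • (v1 • m + p • (EuclideanSpace.single (⟨0, hd⟩ : Fin d) (1:ℝ)))
        = ((1 + (-1) * α⁻¹ * v1) * A) • v + ((-1) * α⁻¹ * p) • (EuclideanSpace.single (⟨0, hd⟩ : Fin d) (1:ℝ)) := by
      rw [hm]; module
    rw [h5, hnorm ((1 + (-1) * α⁻¹ * v1) * A) ((-1) * α⁻¹ * p), hm1]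
    have h6 := main (-1) (by norm_num) (by rw [hudef]; clear * -; nlinarith [le_abs_self v1])
    clear * - h6
    linarith [h6]
end

section
/- Let (ρ, p, (v₁, v₂)) be a primitive state in dimension d = 2 with conservative state U = (D, m₁, m₂, E) ∈ G₁, let r > 0, Δt > 0, and define the geometric source term S(U, r) = −(1/r)(Dv₁, m₁v₁, m₂v₁, m₁). If ξ := v₁Δt/r < q(U)/(p + q(U)), where q(U) = E − √(D² + m₁² + m₂²), then U + Δt·S(U, r) ∈ G₁. -/
/-- Geometric source term of the axisymmetric RHD equations.
For a 2D primitive state with conservative state U = (D, m₁, m₂, E) ∈ G₁,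
r > 0, Δt > 0, and S(U, r) = −(1/r)(Dv₁, m₁v₁, m₂v₁, m₁), if
ξ = v₁Δt/r < q(U)/(p + q(U)) with q(U) = E − √(D² + m₁² + m₂²), then
U + Δt·S(U, r) ∈ G₁. -/
theorem source_term_preserves_admissible_set
    (Γ ρ p v1 v2 : ℝ) (hΓ1 : 1 < Γ) (hΓ2 : Γ ≤ 2)
    (hρ : 0 < ρ) (hp : 0 < p) (hv : v1 ^ 2 + v2 ^ 2 < 1)
    (e h W D m1 m2 E : ℝ)
    (he : e = p / ((Γ - 1) * ρ))
    (hh : h = 1 + e + p / ρ)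
    (hW : W = 1 / Real.sqrt (1 - (v1 ^ 2 + v2 ^ 2)))
    (hD : D = ρ * W)
    (hm1 : m1 = ρ * h * W ^ 2 * v1)
    (hm2 : m2 = ρ * h * W ^ 2 * v2)
    (hE : E = ρ * h * W ^ 2 - p)
    (hU : 0 < D ∧ Real.sqrt (D ^ 2 + m1 ^ 2 + m2 ^ 2) < E)
    (r Δt q : ℝ) (hr : 0 < r) (hΔt : 0 < Δt)
    (hq : q = E - Real.sqrt (D ^ 2 + m1 ^ 2 + m2 ^ 2))
    (hξ : v1 * Δt / r < q / (p + q)) :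
    0 < D - Δt * (D * v1 / r) ∧
    Real.sqrt ((D - Δt * (D * v1 / r)) ^ 2 + (m1 - Δt * (m1 * v1 / r)) ^ 2
        + (m2 - Δt * (m2 * v1 / r)) ^ 2) < E - Δt * (m1 / r) := by
  obtain ⟨hD0, hs⟩ := hU
  set s := Real.sqrt (D ^ 2 + m1 ^ 2 + m2 ^ 2) with hsdef
  have hs0 : 0 ≤ s := Real.sqrt_nonneg _
  have hq0 : 0 < q := by rw [hq]; linarith
  have hpq : 0 < p + q := by linarith
  set ξ := v1 * Δt / r with hξdef
  have hξq : ξ * (p + q) < q := (lt_div_iff₀ hpq).mp hξ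
  have hξ1 : ξ < 1 := by nlinarith
  have hr' : r ≠ 0 := ne_of_gt hr
  constructor
  · have h1 : D - Δt * (D * v1 / r) = D * (1 - ξ) := by
      rw [hξdef]; field_simp
    rw [h1]
    exact mul_pos hD0 (by linarith)
  · have hsum : (D - Δt * (D * v1 / r)) ^ 2 + (m1 - Δt * (m1 * v1 / r)) ^ 2
        + (m2 - Δt * (m2 * v1 / r)) ^ 2
        = (1 - ξ) ^ 2 * (D ^ 2 + m1 ^ 2 + m2 ^ 2) := by
      rw [hξdef]; field_simp
    rw [hsum, Real.sqrt_mul (sq_nonneg _), Real.sqrt_sq (by linarith : (0:ℝ) ≤ 1 - ξ),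
      ← hsdef]
    have hm1E : Δt * (m1 / r) = (E + p) * ξ := by
      rw [hm1, hE, hξdef]; field_simp; ring
    rw [hm1E]
    have hqE : s = E - q := by rw [hq]; ring
    nlinarith [hξq]
end
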